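/- arXiv:2102.11786 — 4 statements merged into one kernel-verified Lean document; each statement's English description precedes it below -/
import Mathlib

section
/- Fix integers n ≥ 1, d ≥ 1, τ ≥ 1, and T a positive multiple of τ; fix reals λ_p > 0 and η₃ > 0 with η₃ ≤ 1/(√12·λ_p·τ). Let x_i^{t+1} ∈ ℝ^d be arbitrary vectors for t = 0,…,T−1 and i = 1,…,n, and let w_i^t ∈ ℝ^d be defined by: w_i⁰ = w⁰ common to all i, and for t ≥ 0, with g_i^t := λ_p(w_i^t − x_i^{t+1}): w_i^{t+1} = w_i^t − η₃·g_i^t if τ does not divide t+1, and w_i^{t+1} = (1/n)Σ_{j=1}^n (w_j^t − η₃·g_j^t) if τ divides t+1. Set w^t := (1/n)Σ_{i=1}^n w_i^t. Assume there are κ_i ≥ 0 such that for all t and i, ‖λ_p(w^t − x_i^{t+1}) − (1/n)Σ_{j=1}^n λ_p(w^t − x_j^{t+1})‖² ≤ κ_i (equivalently, λ_p²·‖x_i^{t+1} − (1/n)Σ_j x_j^{t+1}‖² ≤ κ_i), and set κ := (1/n)Σ_{i=1}^n κ_i. Then (1/T)·Σ_{t=0}^{T−1} (1/n)·Σ_{i=1}^n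 ‖w^t − w_i^t‖² ≤ 6·τ²·η₃²·κ. -/
/-! Write `eᵢᵗ = wᵢᵗ - w̄ᵗ`. Between synchronisations a penalty step contracts `eᵢ` by the factor
`1 - η₃λ_p ∈ [0, 1]` and perturbs it by `η₃` times client `i`'s deviation from the mean
penalty gradient, whose norm is at most `√κᵢ`; a synchronisation resets `eᵢ` to `0`. Hence
`‖eᵢᵗ‖ ≤ (t mod τ) η₃ √κᵢ ≤ τ η₃ √κᵢ`, and averaging the squares over clients and rounds gives
`τ² η₃² κ`. -/

open Finset

theorem Nat.add_one_mod_of_not_dvd {t τ : ℕ} (h : ¬ τ ∣ t + 1) : (t + 1) % τ = t % τ + 1 := by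
  rcases Nat.lt_or_ge τ 2 with hτ | hτ
  · interval_cases τ <;> simp_all
  have h1 : 1 % τ = 1 := Nat.mod_eq_of_lt hτ
  have := Nat.mod_lt t (by omega : 0 < τ)
  rw [Nat.dvd_iff_mod_eq_zero, Nat.add_mod_eq_ite, h1] at h
  rw [Nat.add_mod_eq_ite, h1]
  split_ifs at h ⊢ <;> omega

theorem le_mod_mul_of_reset {r : ℕ → ℝ} {τ T : ℕ} {δ : ℝ} (h₀ : r 0 ≤ 0)
    (hreset : ∀ t < T, τ ∣ t + 1 → r (t + 1) ≤ 0)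
    (hstep : ∀ t < T, ¬ τ ∣ t + 1 → r (t + 1) ≤ r t + δ) :
    ∀ t ≤ T, r t ≤ (t % τ : ℕ) * δ := by
  intro t
  induction t with
  | zero => simpa using h₀
  | succ t ih =>
    intro ht
    by_cases hτt : τ ∣ t + 1
    · simpa [Nat.mod_eq_zero_of_dvd hτt] using hreset t ht hτt
    · rw [Nat.add_one_mod_of_not_dvd hτt, Nat.cast_succ, add_one_mul]
      exact (hstep t ht hτt).trans (by gcongr; exact ih (Nat.le_of_succ_le ht))

theorem one_div_mul_sum_range_le {T : ℕ} {a : ℕ → ℝ} {c : ℝ} (hc : 0 ≤ c)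
    (ha : ∀ t < T, a t ≤ c) : 1 / (T : ℝ) * ∑ t ∈ range T, a t ≤ c := by
  rcases Nat.eq_zero_or_pos T with rfl | hT
  · simpa using hc
  have hsum : ∑ t ∈ range T, a t ≤ T * c := by
    simpa using sum_le_card_nsmul _ _ _ fun t ht => ha t (mem_range.mp ht)
  rw [one_div_mul_eq_div, div_le_iff₀ (by positivity)]
  linarith

section Averaging

variable {E : Type*} [AddCommGroup E] [Module ℝ E] {n : ℕ}

theorem one_div_smul_sum_const (hn : n ≠ 0) (v : E) : (1 / (n : ℝ)) • ∑ _j : Fin n, v = v := by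
  rw [sum_const, card_univ, Fintype.card_fin, ← Nat.cast_smul_eq_nsmul ℝ, smul_smul,
    one_div_mul_cancel (Nat.cast_ne_zero.mpr hn), one_smul]

theorem penalty_step_sub_avg (i : Fin n) (η lam : ℝ) (w x : Fin n → E) :
    (w i - η • lam • (w i - x i)) - (1 / (n : ℝ)) • ∑ j, (w j - η • lam • (w j - x j))
      = (1 - η * lam) • (w i - (1 / (n : ℝ)) • ∑ j, w j)
        - η • (lam • ((1 / (n : ℝ)) • ∑ j, w j - x i)
          - (1 / (n : ℝ)) • ∑ j, lam • ((1 / (n : ℝ)) • ∑ k, w k - x j)) := by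
  have hn : (n : ℝ) ≠ 0 := Nat.cast_ne_zero.mpr i.pos.ne'
  simp only [smul_sub, sum_sub_distrib, ← smul_sum, smul_smul, sum_const, card_univ,
    Fintype.card_fin, ← Nat.cast_smul_eq_nsmul ℝ]
  match_scalars <;> field_simp
  ring

end Averaging

theorem norm_smul_sub_smul_le {E : Type*} [SeminormedAddCommGroup E] [NormedSpace ℝ E]
    {a η δ : ℝ} {e D : E} (ha : |a| ≤ 1) (hη : 0 ≤ η) (hD : ‖D‖ ≤ δ) :
    ‖a • e - η • D‖ ≤ ‖e‖ + η * δ := by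
  calc ‖a • e - η • D‖ ≤ |a| * ‖e‖ + η * ‖D‖ := by
        simpa [norm_smul, abs_of_nonneg hη] using norm_sub_le (a • e) (η • D)
    _ ≤ ‖e‖ + η * δ := by
        gcongr
        exact mul_le_of_le_one_left (norm_nonneg e) ha

theorem abs_one_sub_mul_le_one {η lam c : ℝ} (hη : 0 < η) (hlam : 0 < lam) (hc : 1 ≤ c)
    (hηc : η ≤ 1 / (c * lam)) : |1 - η * lam| ≤ 1 := by
  rw [le_div_iff₀ (by positivity)] at hηc
  rw [abs_le]
  constructor <;> nlinarith [mul_pos hη hlam]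

theorem sq_le_of_le_mod_mul_sqrt {a η κ : ℝ} {t τ : ℕ} (hτ : 0 < τ) (hη : 0 ≤ η) (hκ : 0 ≤ κ)
    (ha : 0 ≤ a) (h : a ≤ (t % τ : ℕ) * (η * √κ)) : a ^ 2 ≤ τ ^ 2 * η ^ 2 * κ := by
  have hmod : ((t % τ : ℕ) : ℝ) ≤ τ := by exact_mod_cast (Nat.mod_lt t hτ).le
  calc a ^ 2 ≤ (τ * (η * √κ)) ^ 2 := by
        gcongr
        exact h.trans (by gcongr)
    _ = τ ^ 2 * η ^ 2 * κ := by rw [mul_pow, mul_pow, Real.sq_sqrt hκ, mul_assoc]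

theorem stmt_2_general
    {n d τ T : ℕ} (hτ : 1 ≤ τ)
    (lam_p η₃ : ℝ) (hlam_p : 0 < lam_p) (hη₃ : 0 < η₃)
    (hη₃' : η₃ ≤ 1 / (Real.sqrt 12 * lam_p * τ))
    (x w : Fin n → ℕ → EuclideanSpace ℝ (Fin d))
    (w0 : EuclideanSpace ℝ (Fin d)) (hw0 : ∀ i, w i 0 = w0)
    (g : Fin n → ℕ → EuclideanSpace ℝ (Fin d))
    (hg : ∀ i t, g i t = lam_p • (w i t - x i (t + 1)))
    (hwup : ∀ i, ∀ t < T,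
      (¬ τ ∣ (t + 1) → w i (t + 1) = w i t - η₃ • g i t) ∧
      (τ ∣ (t + 1) → w i (t + 1) = (1 / (n : ℝ)) • ∑ j, (w j t - η₃ • g j t)))
    (wbar : ℕ → EuclideanSpace ℝ (Fin d))
    (hwbar : ∀ t, wbar t = (1 / (n : ℝ)) • ∑ i, w i t)
    (κ : Fin n → ℝ) (hκpos : ∀ i, 0 ≤ κ i)
    (hκ : ∀ t < T, ∀ i,
      ‖lam_p • (wbar t - x i (t + 1))
          - (1 / (n : ℝ)) • ∑ j, lam_p • (wbar t - x j (t + 1))‖ ^ 2 ≤ κ i)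
    (κbar : ℝ) (hκbar : κbar = (1 / (n : ℝ)) * ∑ i, κ i) :
    (1 / (T : ℝ)) * ∑ t ∈ Finset.range T, (1 / (n : ℝ)) * ∑ i, ‖wbar t - w i t‖ ^ 2
      ≤ 6 * τ ^ 2 * η₃ ^ 2 * κbar := by
  have hcontract : |1 - η₃ * lam_p| ≤ 1 :=
    abs_one_sub_mul_le_one hη₃ hlam_p (c := √12 * τ)
      (one_le_mul_of_one_le_of_one_le (Real.one_le_sqrt.mpr (by norm_num)) (by exact_mod_cast hτ))
      (by rwa [mul_right_comm])
  have hdrift (i : Fin n) : ∀ t ≤ T, ‖w i t - wbar t‖ ≤ (t % τ : ℕ) * (η₃ * √(κ i)) := by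
    have hn : n ≠ 0 := i.pos.ne'
    have hwbar_succ (t : ℕ) (ht : t < T) :
        wbar (t + 1) = (1 / (n : ℝ)) • ∑ j, (w j t - η₃ • g j t) := by
      rw [hwbar]
      by_cases hτt : τ ∣ t + 1
      · simp only [fun j => (hwup j t ht).2 hτt, one_div_smul_sum_const hn]
      · exact congrArg _ (sum_congr rfl fun j _ => (hwup j t ht).1 hτt)
    refine le_mod_mul_of_reset ?_ (fun t ht hτt => ?_) (fun t ht hτt => ?_)
    · rw [hw0, hwbar, funext hw0, one_div_smul_sum_const hn, sub_self, norm_zero]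
    · rw [(hwup i t ht).2 hτt, hwbar_succ t ht, sub_self, norm_zero]
    · rw [(hwup i t ht).1 hτt, hwbar_succ t ht]
      simp only [hg]
      rw [penalty_step_sub_avg i η₃ lam_p (w · t) (x · (t + 1)), ← hwbar]
      exact norm_smul_sub_smul_le hcontract hη₃.le
        ((le_abs_self _).trans (Real.abs_le_sqrt (hκ t ht i)))
  have hκbar_nonneg : 0 ≤ κbar := hκbar ▸ mul_nonneg (by positivity) (sum_nonneg fun i _ => hκpos i)
  have hmean : (1 / (T : ℝ)) * ∑ t ∈ range T, (1 / (n : ℝ)) * ∑ i, ‖wbar t - w i t‖ ^ 2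
      ≤ τ ^ 2 * η₃ ^ 2 * κbar := by
    refine one_div_mul_sum_range_le (by positivity) fun t ht => ?_
    calc (1 / (n : ℝ)) * ∑ i, ‖wbar t - w i t‖ ^ 2
        ≤ (1 / (n : ℝ)) * ∑ i, τ ^ 2 * η₃ ^ 2 * κ i := by
          gcongr with i
          exact sq_le_of_le_mod_mul_sqrt hτ hη₃.le (hκpos i) (norm_nonneg _)
            (norm_sub_rev (wbar t) (w i t) ▸ hdrift i t ht.le)
      _ = τ ^ 2 * η₃ ^ 2 * κbar := by rw [hκbar, ← mul_sum]; ring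
  linarith [mul_nonneg (mul_nonneg (sq_nonneg (τ : ℝ)) (sq_nonneg η₃)) hκbar_nonneg]

/-- Lemma 1 of the paper: average drift of the local copies of the global model
from their average is bounded by `6 τ² η₃² κ`. -/
theorem stmt_2
    {n d τ T : ℕ} (hn : 1 ≤ n) (hd : 1 ≤ d) (hτ : 1 ≤ τ) (hT : 0 < T) (hτT : τ ∣ T)
    (lam_p η₃ : ℝ) (hlam_p : 0 < lam_p) (hη₃ : 0 < η₃)
    (hη₃' : η₃ ≤ 1 / (Real.sqrt 12 * lam_p * τ))
    (x w : Fin n → ℕ → EuclideanSpace ℝ (Fin d))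
    (w0 : EuclideanSpace ℝ (Fin d)) (hw0 : ∀ i, w i 0 = w0)
    (g : Fin n → ℕ → EuclideanSpace ℝ (Fin d))
    (hg : ∀ i t, g i t = lam_p • (w i t - x i (t + 1)))
    (hwup : ∀ i, ∀ t < T,
      (¬ τ ∣ (t + 1) → w i (t + 1) = w i t - η₃ • g i t) ∧
      (τ ∣ (t + 1) → w i (t + 1) = (1 / (n : ℝ)) • ∑ j, (w j t - η₃ • g j t)))
    (wbar : ℕ → EuclideanSpace ℝ (Fin d))
    (hwbar : ∀ t, wbar t = (1 / (n : ℝ)) • ∑ i, w i t)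
    (κ : Fin n → ℝ) (hκpos : ∀ i, 0 ≤ κ i)
    (hκ : ∀ t < T, ∀ i,
      ‖lam_p • (wbar t - x i (t + 1))
          - (1 / (n : ℝ)) • ∑ j, lam_p • (wbar t - x j (t + 1))‖ ^ 2 ≤ κ i)
    (κbar : ℝ) (hκbar : κbar = (1 / (n : ℝ)) * ∑ i, κ i) :
    (1 / (T : ℝ)) * ∑ t ∈ Finset.range T, (1 / (n : ℝ)) * ∑ i, ‖wbar t - w i t‖ ^ 2
      ≤ 6 * τ ^ 2 * η₃ ^ 2 * κbar :=
  stmt_2_general hτ lam_p η₃ hlam_p hη₃ hη₃' x w w0 hw0 g hg hwup wbar hwbar κ hκpos hκ κbar hκbar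
end

section
/- Let L_x := L + G·L_{Q1} + G_{Q1}·L·l_{Q1} and η₁ := 1/(2L_x). Fix c ∈ ℝ^m, x₀, x⁺ ∈ ℝ^d, λ ∈ ℝ, and let g₀ := ∇_x f(Q̃_c(x))|_{x=x₀}. Suppose R is differentiable in its first argument and the first-order stationarity condition ∇f(x₀) + g₀ + (1/η₁)·(x⁺ − x₀) + λ·∇_x R(x⁺, c) = 0 holds. Then ‖∇_x F_λ(x⁺, c)‖ ≤ 3·L_x·‖x⁺ − x₀‖, where ∇_x F_λ(x, c) = ∇f(x) + ∇_x f(Q̃_c(x)) + λ·∇_x R(x, c). -/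
/-!
Write `h x := f (Q̃_c x)` and `v := x⁺ - x₀`. By the chain rule `Dh x = B_x ∘ C_x` with
`B_x = Df (Q̃_c x)`, `C_x = D_x Q̃_c x`, and the splitting `B_x C_x - B_y C_y = (B_x - B_y) C_x + B_y (C_x - C_y)`
shows that `∇h` is `(G L_{Q1} + G_{Q1} L l_{Q1})`-Lipschitz, so `∇f + ∇h` is `L_x`-Lipschitz.
Since `1/η₁ = 2 L_x`, the stationarity condition rewrites the partial gradient at `x⁺` as
`(∇f + ∇h)(x⁺) - (∇f + ∇h)(x₀) - 2 L_x v`, of norm at most `L_x ‖v‖ + 2 L_x ‖v‖`.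
-/

open InnerProductSpace

lemma nonneg_of_norm_le_mul_norm {E F : Type*} [SeminormedAddCommGroup E] [NormedAddCommGroup F]
    {u : E} {v : F} {K : ℝ} (h : ‖u‖ ≤ K * ‖v‖) (hv : v ≠ 0) : 0 ≤ K :=
  nonneg_of_mul_nonneg_left ((norm_nonneg u).trans h) (norm_pos_iff.2 hv)

section Gradient

variable {𝕜 E : Type*} [RCLike 𝕜] [NormedAddCommGroup E] [InnerProductSpace 𝕜 E] [CompleteSpace E]

lemma norm_gradient (φ : E → 𝕜) (x : E) : ‖gradient φ x‖ = ‖fderiv 𝕜 φ x‖ :=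
  (toDual 𝕜 E).symm.norm_map _

lemma norm_gradient_sub_gradient (φ : E → 𝕜) (x y : E) :
    ‖gradient φ x - gradient φ y‖ = ‖fderiv 𝕜 φ x - fderiv 𝕜 φ y‖ := by
  rw [gradient, gradient, ← map_sub]
  exact (toDual 𝕜 E).symm.norm_map _

end Gradient

lemma norm_fderiv_comp_sub_le {𝕜 E F G : Type*} [NontriviallyNormedField 𝕜]
    [NormedAddCommGroup E] [NormedSpace 𝕜 E] [NormedAddCommGroup F] [NormedSpace 𝕜 F]
    [NormedAddCommGroup G] [NormedSpace 𝕜 G] {f : F → G} {Q : E → F} {Gf Lf lQ LQ GQ : ℝ}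
    (hf : Differentiable 𝕜 f) (hQ : Differentiable 𝕜 Q) (hLf : 0 ≤ Lf)
    (hfG : ∀ y, ‖fderiv 𝕜 f y‖ ≤ Gf) (hfL : ∀ y y', ‖fderiv 𝕜 f y - fderiv 𝕜 f y'‖ ≤ Lf * ‖y - y'‖)
    (hQl : ∀ x x', ‖Q x - Q x'‖ ≤ lQ * ‖x - x'‖)
    (hQL : ∀ x x', ‖fderiv 𝕜 Q x - fderiv 𝕜 Q x'‖ ≤ LQ * ‖x - x'‖)
    (hQG : ∀ x, ‖fderiv 𝕜 Q x‖ ≤ GQ) (x x' : E) :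
    ‖fderiv 𝕜 (fun z => f (Q z)) x - fderiv 𝕜 (fun z => f (Q z)) x'‖
      ≤ (Gf * LQ + GQ * Lf * lQ) * ‖x - x'‖ := by
  have hchain : ∀ z, fderiv 𝕜 (fun z => f (Q z)) z = (fderiv 𝕜 f (Q z)).comp (fderiv 𝕜 Q z) :=
    fun z => fderiv_comp z hf.differentiableAt hQ.differentiableAt
  set B₁ := fderiv 𝕜 f (Q x)
  set B₂ := fderiv 𝕜 f (Q x')
  set C₁ := fderiv 𝕜 Q x
  set C₂ := fderiv 𝕜 Q x'
  have hsplit : B₁.comp C₁ - B₂.comp C₂ = (B₁ - B₂).comp C₁ + B₂.comp (C₁ - C₂) := by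
    rw [ContinuousLinearMap.sub_comp, ContinuousLinearMap.comp_sub]; abel
  have hB : ‖B₁ - B₂‖ ≤ Lf * lQ * ‖x - x'‖ := calc
    ‖B₁ - B₂‖ ≤ Lf * ‖Q x - Q x'‖ := hfL _ _
    _ ≤ Lf * (lQ * ‖x - x'‖) := mul_le_mul_of_nonneg_left (hQl x x') hLf
    _ = Lf * lQ * ‖x - x'‖ := by ring
  have hGQ : 0 ≤ GQ := (norm_nonneg _).trans (hQG x)
  have hGf : 0 ≤ Gf := (norm_nonneg _).trans (hfG (Q x'))
  rw [hchain, hchain, hsplit]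
  calc ‖(B₁ - B₂).comp C₁ + B₂.comp (C₁ - C₂)‖
      ≤ ‖B₁ - B₂‖ * ‖C₁‖ + ‖B₂‖ * ‖C₁ - C₂‖ :=
        (norm_add_le _ _).trans (add_le_add (ContinuousLinearMap.opNorm_comp_le _ _)
          (ContinuousLinearMap.opNorm_comp_le _ _))
    _ ≤ Lf * lQ * ‖x - x'‖ * GQ + Gf * (LQ * ‖x - x'‖) :=
        add_le_add (mul_le_mul_of_nonneg hB (hQG x) (norm_nonneg _) hGQ)
          (mul_le_mul_of_nonneg' (hfG _) (hQL x x') (norm_nonneg _) hGf)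
    _ = (Gf * LQ + GQ * Lf * lQ) * ‖x - x'‖ := by ring

lemma norm_gradient_comp_sub_le {E F : Type*} [NormedAddCommGroup E] [InnerProductSpace ℝ E]
    [CompleteSpace E] [NormedAddCommGroup F] [InnerProductSpace ℝ F] [CompleteSpace F]
    {f : F → ℝ} {Q : E → F} {Gf Lf lQ LQ GQ : ℝ}
    (hf : Differentiable ℝ f) (hQ : Differentiable ℝ Q) (hLf : 0 ≤ Lf)
    (hfG : ∀ y, ‖gradient f y‖ ≤ Gf) (hfL : ∀ y y', ‖gradient f y - gradient f y'‖ ≤ Lf * ‖y - y'‖)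
    (hQl : ∀ x x', ‖Q x - Q x'‖ ≤ lQ * ‖x - x'‖)
    (hQL : ∀ x x', ‖fderiv ℝ Q x - fderiv ℝ Q x'‖ ≤ LQ * ‖x - x'‖)
    (hQG : ∀ x, ‖fderiv ℝ Q x‖ ≤ GQ) (x x' : E) :
    ‖gradient (fun z => f (Q z)) x - gradient (fun z => f (Q z)) x'‖
      ≤ (Gf * LQ + GQ * Lf * lQ) * ‖x - x'‖ := by
  rw [norm_gradient_sub_gradient]
  refine norm_fderiv_comp_sub_le hf hQ hLf (fun y => ?_) (fun y y' => ?_) hQl hQL hQG x x'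
  · rw [← norm_gradient]; exact hfG y
  · rw [← norm_gradient_sub_gradient]; exact hfL y y'

lemma norm_add_le_of_proximal_step {E : Type*} [SeminormedAddCommGroup E] [NormedSpace ℝ E]
    {g₀ g₁ w x y : E} {K : ℝ} (hK : 0 ≤ K) (hg : ‖g₁ - g₀‖ ≤ K * ‖y - x‖)
    (hstat : g₀ + (2 * K) • (y - x) + w = 0) :
    ‖g₁ + w‖ ≤ 3 * K * ‖y - x‖ := by
  have hw : g₁ + w = (g₁ - g₀) - (2 * K) • (y - x) := by
    linear_combination (norm := module) hstat
  calc ‖g₁ + w‖ ≤ ‖g₁ - g₀‖ + ‖(2 * K) • (y - x)‖ := hw ▸ norm_sub_le _ _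
    _ ≤ K * ‖y - x‖ + 2 * K * ‖y - x‖ := by
        rw [norm_smul, Real.norm_of_nonneg (by positivity)]; gcongr
    _ = 3 * K * ‖y - x‖ := by ring

theorem stmt_12_general
    {d m : ℕ}
    (f : EuclideanSpace ℝ (Fin d) → ℝ)
    (Qt : EuclideanSpace ℝ (Fin d) → EuclideanSpace ℝ (Fin m) → EuclideanSpace ℝ (Fin d))
    (R : EuclideanSpace ℝ (Fin d) → EuclideanSpace ℝ (Fin m) → ℝ)
    (G L lQ1 LQ1 GQ1 : ℝ)
    (hf : Differentiable ℝ f)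
    (hfG : ∀ x, ‖gradient f x‖ ≤ G)
    (hfL : ∀ x y, ‖gradient f x - gradient f y‖ ≤ L * ‖x - y‖)
    (hQd1 : ∀ c, Differentiable ℝ (fun x => Qt x c))
    (hQl1 : ∀ c x y, ‖Qt x c - Qt y c‖ ≤ lQ1 * ‖x - y‖)
    (hQL1 : ∀ c x y,
      ‖fderiv ℝ (fun z => Qt z c) x - fderiv ℝ (fun z => Qt z c) y‖ ≤ LQ1 * ‖x - y‖)
    (hQG1 : ∀ c x, ‖fderiv ℝ (fun z => Qt z c) x‖ ≤ GQ1)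
    (Lx η₁ : ℝ)
    (hLx : Lx = L + G * LQ1 + GQ1 * L * lQ1)
    (hη₁ : η₁ = 1 / (2 * Lx))
    (c : EuclideanSpace ℝ (Fin m)) (x₀ xp : EuclideanSpace ℝ (Fin d)) (lam : ℝ)
    (hstat : gradient f x₀ + gradient (fun y => f (Qt y c)) x₀
        + (1 / η₁) • (xp - x₀) + lam • gradient (fun z => R z c) xp = 0) :
    ‖gradient f xp + gradient (fun y => f (Qt y c)) xp
        + lam • gradient (fun z => R z c) xp‖
      ≤ 3 * Lx * ‖xp - x₀‖ := by
  rcases eq_or_ne xp x₀ with rfl | hne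
  · simpa using hstat
  have hv : xp - x₀ ≠ 0 := sub_ne_zero.2 hne
  have hL : 0 ≤ L := nonneg_of_norm_le_mul_norm (hfL xp x₀) hv
  have hlip : ‖(gradient f xp + gradient (fun y => f (Qt y c)) xp)
      - (gradient f x₀ + gradient (fun y => f (Qt y c)) x₀)‖ ≤ Lx * ‖xp - x₀‖ := calc
    _ ≤ ‖gradient f xp - gradient f x₀‖
          + ‖gradient (fun y => f (Qt y c)) xp - gradient (fun y => f (Qt y c)) x₀‖ := by
        rw [add_sub_add_comm]; exact norm_add_le _ _
    _ ≤ L * ‖xp - x₀‖ + (G * LQ1 + GQ1 * L * lQ1) * ‖xp - x₀‖ :=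
        add_le_add (hfL xp x₀) (norm_gradient_comp_sub_le hf (hQd1 c) hL hfG hfL (hQl1 c)
          (hQL1 c) (hQG1 c) xp x₀)
    _ = Lx * ‖xp - x₀‖ := by rw [hLx]; ring
  rw [hη₁, one_div_one_div] at hstat
  exact norm_add_le_of_proximal_step (nonneg_of_norm_le_mul_norm hlip hv) hlip hstat

/-- Gradient bound after the proximal step in `x` (centralized setting): under
the first-order stationarity condition of the proximal update with
`η₁ = 1/(2 L_x)`, the partial gradient of `F_λ` in `x` at `x⁺` is bounded by
`3 L_x ‖x⁺ − x₀‖`. -/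
theorem stmt_12
    {d m : ℕ}
    (f : EuclideanSpace ℝ (Fin d) → ℝ)
    (Qt : EuclideanSpace ℝ (Fin d) → EuclideanSpace ℝ (Fin m) → EuclideanSpace ℝ (Fin d))
    (R : EuclideanSpace ℝ (Fin d) → EuclideanSpace ℝ (Fin m) → ℝ)
    (G L lQ1 LQ1 GQ1 : ℝ)
    (hf : Differentiable ℝ f)
    (hfG : ∀ x, ‖gradient f x‖ ≤ G)
    (hfL : ∀ x y, ‖gradient f x - gradient f y‖ ≤ L * ‖x - y‖)
    (hQd1 : ∀ c, Differentiable ℝ (fun x => Qt x c))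
    (hQl1 : ∀ c x y, ‖Qt x c - Qt y c‖ ≤ lQ1 * ‖x - y‖)
    (hQL1 : ∀ c x y,
      ‖fderiv ℝ (fun z => Qt z c) x - fderiv ℝ (fun z => Qt z c) y‖ ≤ LQ1 * ‖x - y‖)
    (hQG1 : ∀ c x, ‖fderiv ℝ (fun z => Qt z c) x‖ ≤ GQ1)
    (hRd1 : ∀ c, Differentiable ℝ (fun x => R x c))
    (Lx η₁ : ℝ)
    (hLx : Lx = L + G * LQ1 + GQ1 * L * lQ1)
    (hη₁ : η₁ = 1 / (2 * Lx))
    (c : EuclideanSpace ℝ (Fin m)) (x₀ xp : EuclideanSpace ℝ (Fin d)) (lam : ℝ)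
    (hstat : gradient f x₀ + gradient (fun y => f (Qt y c)) x₀
        + (1 / η₁) • (xp - x₀) + lam • gradient (fun z => R z c) xp = 0) :
    ‖gradient f xp + gradient (fun y => f (Qt y c)) xp
        + lam • gradient (fun z => R z c) xp‖
      ≤ 3 * Lx * ‖xp - x₀‖ :=
  stmt_12_general f Qt R G L lQ1 LQ1 GQ1 hf hfG hfL hQd1 hQl1 hQL1 hQG1 Lx η₁ hLx hη₁ c x₀ xp lam
    hstat
end

section
/- Let φ : ℝ^d → ℝ be differentiable with λ_p-Lipschitz gradient, for some λ_p > 0. Let w, u, g ∈ ℝ^d, let η > 0, and set w' := w − η·g. Then φ(w') ≤ φ(w) − (η/2 − λ_p·η²)·‖∇φ(w)‖² + (η + 2λ_p·η²)·‖g − ∇φ(u)‖² + (η + 2λ_p·η²)·λ_p²·‖u − w‖². -/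
/-!
By the descent lemma, `φ (w - η g)` is at most the quadratic model
`φ w - η ⟪∇φ w, g⟫ + (λ/2) η² ‖g‖²`. Writing `g = ∇φ w + e`, Young's inequality
`-⟪∇φ w, e⟫ ≤ (‖∇φ w‖² + ‖e‖²)/2` and `‖g‖² ≤ 2‖∇φ w‖² + 2‖e‖²` turn this into
`φ w - (η/2 - λη²)‖∇φ w‖² + (η/2 + λη²)‖e‖²`; finally
`‖e‖² ≤ 2‖g - ∇φ u‖² + 2λ²‖u - w‖²` because `∇φ` is `λ`-Lipschitz.
-/

open Set
open scoped Gradient RealInnerProductSpace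

lemma norm_add_sq_le_two_mul {E : Type*} [SeminormedAddCommGroup E] (x y : E) :
    ‖x + y‖ ^ 2 ≤ 2 * (‖x‖ ^ 2 + ‖y‖ ^ 2) :=
  (pow_le_pow_left₀ (norm_nonneg _) (norm_add_le x y) 2).trans add_sq_le

section gradient
variable {F : Type*} [NormedAddCommGroup F] [InnerProductSpace ℝ F] [CompleteSpace F]
  {φ : F → ℝ} {L : ℝ}

lemma HasGradientAt.hasDerivAt_comp_add_smul {g x v : F} {t : ℝ}
    (h : HasGradientAt φ g (x + t • v)) :
    HasDerivAt (fun s : ℝ => φ (x + s • v)) ⟪g, v⟫ t := by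
  have hline : HasDerivAt (fun s : ℝ => x + s • v) v t := by
    simpa using ((hasDerivAt_id t).smul_const v).const_add x
  exact h.hasFDerivAt.comp_hasDerivAt t hline

theorem le_add_inner_gradient_add_sq (hφ : Differentiable ℝ φ)
    (hφL : ∀ a b, ‖∇ φ a - ∇ φ b‖ ≤ L * ‖a - b‖) (x y : F) :
    φ y ≤ φ x + ⟪∇ φ x, y - x⟫ + L / 2 * ‖y - x‖ ^ 2 := by
  set v := y - x
  -- The gap between the quadratic model and `φ` along the segment increases with `t`.
  let gap : ℝ → ℝ := fun t => t * ⟪∇ φ x, v⟫ + L / 2 * t ^ 2 * ‖v‖ ^ 2 - φ (x + t • v)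
  have hgap : ∀ t, HasDerivAt gap (⟪∇ φ x, v⟫ + L * t * ‖v‖ ^ 2 - ⟪∇ φ (x + t • v), v⟫) t := by
    intro t
    have hφt := (hφ (x + t • v)).hasGradientAt.hasDerivAt_comp_add_smul
    refine ((((hasDerivAt_id t).mul_const _).add
      (((hasDerivAt_pow 2 t).const_mul (L / 2)).mul_const (‖v‖ ^ 2))).sub hφt).congr_deriv ?_
    simp only [one_mul, Nat.cast_ofNat]
    ring
  have hgap_nonneg : ∀ t, 0 ≤ t → 0 ≤ ⟪∇ φ x, v⟫ + L * t * ‖v‖ ^ 2 - ⟪∇ φ (x + t • v), v⟫ := by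
    intro t ht
    have hlip : ‖∇ φ (x + t • v) - ∇ φ x‖ ≤ L * (t * ‖v‖) := by
      simpa [norm_smul, abs_of_nonneg ht] using hφL (x + t • v) x
    have := real_inner_le_norm (∇ φ (x + t • v) - ∇ φ x) v
    rw [inner_sub_left] at this
    nlinarith [mul_le_mul_of_nonneg_right hlip (norm_nonneg v)]
  have hmono : MonotoneOn gap (Icc 0 1) :=
    monotoneOn_of_hasDerivWithinAt_nonneg (convex_Icc 0 1)
      (fun t _ => (hgap t).continuousAt.continuousWithinAt)
      (fun t _ => (hgap t).hasDerivWithinAt)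
      (fun t ht => hgap_nonneg t (by rw [interior_Icc] at ht; exact ht.1.le))
  have := hmono (left_mem_Icc.2 zero_le_one) (right_mem_Icc.2 zero_le_one) zero_le_one
  simp only [gap, zero_smul, add_zero, one_smul, v, add_sub_cancel] at this
  linarith

theorem le_sub_smul_of_lipschitz_gradient (hL : 0 ≤ L) (hφ : Differentiable ℝ φ)
    (hφL : ∀ a b, ‖∇ φ a - ∇ φ b‖ ≤ L * ‖a - b‖) (x g : F) {η : ℝ} (hη : 0 ≤ η) :
    φ (x - η • g) ≤ φ x - (η / 2 - L * η ^ 2) * ‖∇ φ x‖ ^ 2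
      + (η / 2 + L * η ^ 2) * ‖g - ∇ φ x‖ ^ 2 := by
  have hdesc := le_add_inner_gradient_add_sq hφ hφL x (x - η • g)
  set e := g - ∇ φ x
  have hg : g = ∇ φ x + e := by simp [e]
  have hstep : x - η • g - x = -(η • g) := by abel
  have hinner : ⟪∇ φ x, -(η • g)⟫ = -η * ‖∇ φ x‖ ^ 2 - η * ⟪∇ φ x, e⟫ := by
    rw [inner_neg_right, real_inner_smul_right, hg, inner_add_right, real_inner_self_eq_norm_sq]
    ring
  have hnorm : ‖-(η • g)‖ ^ 2 = η ^ 2 * ‖g‖ ^ 2 := by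
    rw [norm_neg, norm_smul, Real.norm_of_nonneg hη, mul_pow]
  have hyoung : -⟪∇ φ x, e⟫ ≤ (‖∇ φ x‖ ^ 2 + ‖e‖ ^ 2) / 2 := by
    nlinarith [norm_add_sq_real (∇ φ x) e, sq_nonneg ‖∇ φ x + e‖]
  have hg_sq : ‖g‖ ^ 2 ≤ 2 * (‖∇ φ x‖ ^ 2 + ‖e‖ ^ 2) := hg ▸ norm_add_sq_le_two_mul _ _
  rw [hstep, hinner, hnorm] at hdesc
  linarith [mul_le_mul_of_nonneg_left hyoung hη,
    mul_le_mul_of_nonneg_left hg_sq (by positivity : 0 ≤ L / 2 * η ^ 2)]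

end gradient

/-- Descent-type inequality for a gradient step with an inexact gradient:
if `φ` has `λ_p`-Lipschitz gradient and `w' = w − η g`, then
`φ(w') ≤ φ(w) − (η/2 − λ_p η²)‖∇φ(w)‖² + (η + 2λ_p η²)‖g − ∇φ(u)‖²
  + (η + 2λ_p η²) λ_p² ‖u − w‖²`. -/
theorem stmt_15
    {d : ℕ}
    (φ : EuclideanSpace ℝ (Fin d) → ℝ)
    (lam_p : ℝ) (hlam_p : 0 < lam_p)
    (hφ : Differentiable ℝ φ)
    (hφL : ∀ a b, ‖gradient φ a - gradient φ b‖ ≤ lam_p * ‖a - b‖)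
    (w u g : EuclideanSpace ℝ (Fin d)) (η : ℝ) (hη : 0 < η)
    (w' : EuclideanSpace ℝ (Fin d)) (hw' : w' = w - η • g) :
    φ w' ≤ φ w - (η / 2 - lam_p * η ^ 2) * ‖gradient φ w‖ ^ 2
        + (η + 2 * lam_p * η ^ 2) * ‖g - gradient φ u‖ ^ 2
        + (η + 2 * lam_p * η ^ 2) * lam_p ^ 2 * ‖u - w‖ ^ 2 := by
  subst hw'
  have hstep := le_sub_smul_of_lipschitz_gradient hlam_p.le hφ hφL w g hη.le
  have herr : ‖g - ∇ φ w‖ ^ 2 ≤ 2 * ‖g - ∇ φ u‖ ^ 2 + 2 * lam_p ^ 2 * ‖u - w‖ ^ 2 := by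
    have hlip : ‖∇ φ u - ∇ φ w‖ ^ 2 ≤ lam_p ^ 2 * ‖u - w‖ ^ 2 := by
      rw [← mul_pow]; exact pow_le_pow_left₀ (norm_nonneg _) (hφL u w) 2
    have := norm_add_sq_le_two_mul (g - ∇ φ u) (∇ φ u - ∇ φ w)
    rw [sub_add_sub_cancel] at this
    linarith
  linarith [mul_le_mul_of_nonneg_left herr (by positivity : 0 ≤ η / 2 + lam_p * η ^ 2)]
end

section
/- Fix integers d ≥ 1 and m ≥ 1, reals η > 0 and λ > 0, a vector y ∈ ℝ^d, and a finite set of centers {c_1,…,c_m} ⊂ ℝ. Let C := {z ∈ ℝ^d : z_i ∈ {c_1,…,c_m} for every i}, let R(x) := (1/2)·min_{z ∈ C} ‖z − x‖₁, and let Q_c(y) ∈ C be any vector such that for each coordinate i, Q_c(y)_i is a nearest center to y_i, i.e. |Q_c(y)_i − y_i| = min_{1 ≤ j ≤ m} |c_j − y_i|. Define x̂ ∈ ℝ^d coordinate-wise by: x̂_i = y_i − λη/2 if y_i ≥ Q_c(y)_i + λη/2; x̂_i = y_i + λη/2 if y_i ≤ Q_c(y)_i − λη/2; and x̂_i = Q_c(y)_i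 otherwise. Then x̂ is a global minimizer over x ∈ ℝ^d of the proximal objective x ↦ (1/(2η))·‖x − y‖₂² + λ·R(x); that is, x̂ = prox_{ηλR}(y). -/
/-!
Since the grid `C` is a product of copies of `{c₁, …, c_m}`, the objective splits into
one-dimensional problems. With `τ = λη/2`, the infimum over `t` of
`(t - y)² + 2τ|c - t|` is the (doubled) Huber function of `c - y`, attained at
`t = y + clamp_{[-τ, τ]}(c - y)`. The Huber function increases with `|c - y|`, so the best
center is the nearest one, `Q_c(y)`, and the minimizer is exactly `x̂`.
-/

/-- Twice the Huber function with threshold `τ`: the infimal convolution of `s ↦ s²` with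
`s ↦ 2τ|s|`. -/
noncomputable def huber (τ a : ℝ) : ℝ := if |a| ≤ τ then a ^ 2 else 2 * τ * |a| - τ ^ 2

section Huber

variable {τ : ℝ}

theorem huber_le_sq_add_abs (hτ : 0 ≤ τ) (a s : ℝ) : huber τ a ≤ s ^ 2 + 2 * τ * |a - s| := by
  have htri : |a| ≤ |s| + |a - s| := by
    simpa using abs_add_le s (a - s)
  unfold huber
  split_ifs with ha
  · rcases le_or_gt |a| |s| with has | has
    · nlinarith [sq_abs a, sq_abs s, abs_nonneg a, abs_nonneg (a - s)]
    · nlinarith [sq_abs a, sq_abs s, abs_nonneg s, abs_nonneg (a - s)]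
  · nlinarith [sq_nonneg (|s| - τ), sq_abs s]

theorem huber_mono (hτ : 0 ≤ τ) {a b : ℝ} (hab : |a| ≤ |b|) : huber τ a ≤ huber τ b := by
  unfold huber
  split_ifs with ha hb hb
  · nlinarith [sq_abs a, sq_abs b, abs_nonneg a]
  · nlinarith [sq_abs a, abs_nonneg a, mul_le_mul_of_nonneg_left (not_le.mp hb).le hτ]
  · linarith
  · nlinarith

theorem huber_eq_sq_clamp_add_abs (hτ : 0 ≤ τ) (a : ℝ) :
    huber τ a = max (-τ) (min a τ) ^ 2 + 2 * τ * |a - max (-τ) (min a τ)| := by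
  unfold huber
  rcases le_total a (-τ) with h | h
  · rw [min_eq_left (by linarith), max_eq_left h, abs_of_nonpos (by linarith : a ≤ 0),
      abs_of_nonpos (by linarith : a - -τ ≤ 0)]
    split_ifs <;> nlinarith
  rcases le_total a τ with h' | h'
  · rw [min_eq_left h', max_eq_right h, sub_self, abs_zero, if_pos (abs_le.mpr ⟨h, h'⟩)]
    ring
  · rw [min_eq_right h', max_eq_right (by linarith), abs_of_nonneg (by linarith : 0 ≤ a),
      abs_of_nonneg (by linarith : 0 ≤ a - τ)]
    split_ifs <;> nlinarith

theorem ite_sub_eq_clamp (hτ : 0 ≤ τ) (q y : ℝ) :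
    (if q + τ ≤ y then y - τ else if y ≤ q - τ then y + τ else q) - y
      = max (-τ) (min (q - y) τ) := by
  split_ifs with h₁ h₂
  · rw [min_eq_left (by linarith), max_eq_left (by linarith)]; ring
  · rw [min_eq_right (by linarith), max_eq_right (by linarith)]; ring
  · rw [min_eq_left (by linarith), max_eq_right (by linarith)]

theorem sq_add_abs_le_of_softThreshold (hτ : 0 ≤ τ) {y q c xh : ℝ} (hqc : |q - y| ≤ |c - y|)
    (hxh : xh = if q + τ ≤ y then y - τ else if y ≤ q - τ then y + τ else q) (t : ℝ) :
    (xh - y) ^ 2 + 2 * τ * |q - xh| ≤ (t - y) ^ 2 + 2 * τ * |c - t| := by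
  have hclamp : xh - y = max (-τ) (min (q - y) τ) := hxh ▸ ite_sub_eq_clamp hτ q y
  calc (xh - y) ^ 2 + 2 * τ * |q - xh| = huber τ (q - y) := by
        rw [huber_eq_sq_clamp_add_abs hτ, ← hclamp, sub_sub_sub_cancel_right]
    _ ≤ huber τ (c - y) := huber_mono hτ hqc
    _ ≤ (t - y) ^ 2 + 2 * τ * |c - t| := by
        simpa only [sub_sub_sub_cancel_right] using huber_le_sq_add_abs hτ (c - y) (t - y)

end Huber

theorem le_add_mul_csInf_image {α : Type*} {C : Set α} {f : α → ℝ} {a b c : ℝ}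
    (hC : C.Nonempty) (hc : 0 < c) (h : ∀ z ∈ C, a ≤ b + c * f z) :
    a ≤ b + c * sInf (f '' C) := by
  have : (a - b) / c ≤ sInf (f '' C) := le_csInf (hC.image f) <| by
    rintro _ ⟨z, hz, rfl⟩
    rw [div_le_iff₀' hc]
    linarith [h z hz]
  rw [div_le_iff₀' hc] at this
  linarith

theorem stmt_17_general
    {d m : ℕ}
    (η lam : ℝ) (hη : 0 < η) (hlam : 0 < lam)
    (y : EuclideanSpace ℝ (Fin d)) (cs : Fin m → ℝ)
    (C : Set (EuclideanSpace ℝ (Fin d)))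
    (hC : C = {z | ∀ i, ∃ j, z i = cs j})
    (R : EuclideanSpace ℝ (Fin d) → ℝ)
    (hR : ∀ x, R x = (1 / 2) * sInf ((fun z => ∑ i, |z i - x i|) '' C))
    (Qy : EuclideanSpace ℝ (Fin d)) (hQyC : Qy ∈ C)
    (hQy : ∀ (i : Fin d) (j : Fin m), |Qy i - y i| ≤ |cs j - y i|)
    (xhat : EuclideanSpace ℝ (Fin d))
    (hxhat : ∀ i : Fin d, xhat i =
      if Qy i + lam * η / 2 ≤ y i then y i - lam * η / 2
      else if y i ≤ Qy i - lam * η / 2 then y i + lam * η / 2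
      else Qy i) :
    ∀ x : EuclideanSpace ℝ (Fin d),
      (1 / (2 * η)) * ‖xhat - y‖ ^ 2 + lam * R xhat
        ≤ (1 / (2 * η)) * ‖x - y‖ ^ 2 + lam * R x := by
  intro x
  set τ := lam * η / 2 with hτ_def
  have hτ : 0 < τ := by positivity
  have hcoord : ∀ z ∈ C, ∀ i, (xhat i - y i) ^ 2 + 2 * τ * |Qy i - xhat i|
      ≤ (x i - y i) ^ 2 + 2 * τ * |z i - x i| := by
    intro z hz i
    obtain ⟨j, hj⟩ := (hC ▸ hz) i
    exact hj ▸ sq_add_abs_le_of_softThreshold hτ.le (hQy i j) (hxhat i) (x i)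
  have hbdd : BddBelow ((fun z => ∑ i, |z i - xhat i|) '' C) :=
    ⟨0, by rintro _ ⟨z, -, rfl⟩; positivity⟩
  have key : ‖xhat - y‖ ^ 2 + 2 * τ * sInf ((fun z => ∑ i, |z i - xhat i|) '' C)
      ≤ ‖x - y‖ ^ 2 + 2 * τ * sInf ((fun z => ∑ i, |z i - x i|) '' C) :=
    calc _ ≤ ‖xhat - y‖ ^ 2 + 2 * τ * ∑ i, |Qy i - xhat i| := by
          gcongr; exact csInf_le hbdd ⟨Qy, hQyC, rfl⟩
      _ ≤ _ := le_add_mul_csInf_image ⟨Qy, hQyC⟩ (by positivity) fun z hz => by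
          simpa only [EuclideanSpace.real_norm_sq_eq, PiLp.sub_apply, Finset.mul_sum,
            ← Finset.sum_add_distrib] using Finset.sum_le_sum fun i _ => hcoord z hz i
  have hobj : ∀ v, (1 / (2 * η)) * ‖v - y‖ ^ 2 + lam * R v
      = (1 / (2 * η)) * (‖v - y‖ ^ 2 + 2 * τ * sInf ((fun z => ∑ i, |z i - v i|) '' C)) := by
    intro v
    rw [hR, hτ_def]
    field_simp
  rw [hobj, hobj]
  gcongr

/-- Closed form of the proximal map of the (halved) ℓ1-distance to the
quantization grid: the coordinate-wise soft-thresholding vector `x̂` globally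
minimizes the proximal objective `x ↦ (1/(2η))‖x − y‖₂² + λ R(x)`. -/
theorem stmt_17
    {d m : ℕ} (hd : 1 ≤ d) (hm : 1 ≤ m)
    (η lam : ℝ) (hη : 0 < η) (hlam : 0 < lam)
    (y : EuclideanSpace ℝ (Fin d)) (cs : Fin m → ℝ)
    (C : Set (EuclideanSpace ℝ (Fin d)))
    (hC : C = {z | ∀ i, ∃ j, z i = cs j})
    (R : EuclideanSpace ℝ (Fin d) → ℝ)
    (hR : ∀ x, R x = (1 / 2) * sInf ((fun z => ∑ i, |z i - x i|) '' C))
    (Qy : EuclideanSpace ℝ (Fin d)) (hQyC : Qy ∈ C)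
    (hQy : ∀ (i : Fin d) (j : Fin m), |Qy i - y i| ≤ |cs j - y i|)
    (xhat : EuclideanSpace ℝ (Fin d))
    (hxhat : ∀ i : Fin d, xhat i =
      if Qy i + lam * η / 2 ≤ y i then y i - lam * η / 2
      else if y i ≤ Qy i - lam * η / 2 then y i + lam * η / 2
      else Qy i) :
    ∀ x : EuclideanSpace ℝ (Fin d),
      (1 / (2 * η)) * ‖xhat - y‖ ^ 2 + lam * R xhat
        ≤ (1 / (2 * η)) * ‖x - y‖ ^ 2 + lam * R x :=
  stmt_17_general η lam hη hlam y cs C hC R hR Qy hQyC hQy xhat hxhat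
end
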